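/- arXiv:2102.06925 — 2 statements merged into one kernel-verified Lean document; each statement's English description precedes it below -/
import Mathlib

section
/- Under the hypotheses of the previous statement, if additionally n h ≤ T_M for a fixed T_M > 0 and |y_0 − z_0| ≤ ε, then |y_n − z_n| ≤ exp(T_M L₁ (1 + h L₁)) · ε. In particular the improved implicit Euler scheme is zero-stable: small perturbations of the initial value produce uniformly small perturbations of the numerical solution on any fixed time interval. -/
theorem stmt_4 (f : ℝ → ℝ → ℝ → ℝ) (L₁ h T_M ε : ℝ) (hL₁ : 0 < L₁) (hh : 0 < h)
    (hTM : 0 < T_M)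
    (hf : ∀ t u x₁ x₂, |f t x₁ u - f t x₂ u| ≤ L₁ * |x₁ - x₂|)
    (t ν : ℕ → ℝ) (y z : ℕ → ℝ)
    (hy : ∀ n, y (n + 1) = y n + h * f (t (n + 1)) (y n + h * f (t (n + 1)) (y n) (ν n)) (ν n))
    (hz : ∀ n, z (n + 1) = z n + h * f (t (n + 1)) (z n + h * f (t (n + 1)) (z n) (ν n)) (ν n))
    (hε : |y 0 - z 0| ≤ ε) :
    ∀ n : ℕ, n * h ≤ T_M → |y n - z n| ≤ Real.exp (T_M * L₁ * (1 + h * L₁)) * ε := by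
  have hε0 : 0 ≤ ε := le_trans (abs_nonneg _) hε
  set a : ℝ := h * L₁ * (1 + h * L₁) with ha
  have ha0 : 0 ≤ a := by positivity
  have key : ∀ n, |y n - z n| ≤ (1 + a) ^ n * |y 0 - z 0| := by
    intro n
    induction n with
    | zero => simp
    | succ n ih =>
      have hd : (0:ℝ) ≤ |y n - z n| := abs_nonneg _
      have h2 : |f (t (n+1)) (y n) (ν n) - f (t (n+1)) (z n) (ν n)| ≤ L₁ * |y n - z n| :=
        hf _ _ _ _
      have h4 : |(y n + h * f (t (n+1)) (y n) (ν n)) - (z n + h * f (t (n+1)) (z n) (ν n))|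
          ≤ |y n - z n| + h * (L₁ * |y n - z n|) := by
        have e : (y n + h * f (t (n+1)) (y n) (ν n)) - (z n + h * f (t (n+1)) (z n) (ν n))
            = (y n - z n) + h * (f (t (n+1)) (y n) (ν n) - f (t (n+1)) (z n) (ν n)) := by ring
        rw [e]
        refine le_trans (abs_add_le _ _) ?_
        gcongr
        rw [abs_mul, abs_of_pos hh]
        exact mul_le_mul_of_nonneg_left h2 hh.le
      have h3 : |f (t (n+1)) (y n + h * f (t (n+1)) (y n) (ν n)) (ν n)
            - f (t (n+1)) (z n + h * f (t (n+1)) (z n) (ν n)) (ν n)|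
          ≤ L₁ * (|y n - z n| + h * (L₁ * |y n - z n|)) :=
        le_trans (hf _ _ _ _) (mul_le_mul_of_nonneg_left h4 hL₁.le)
      have h1 : |y (n+1) - z (n+1)| ≤ (1 + a) * |y n - z n| := by
        rw [hy, hz]
        have e : y n + h * f (t (n+1)) (y n + h * f (t (n+1)) (y n) (ν n)) (ν n)
            - (z n + h * f (t (n+1)) (z n + h * f (t (n+1)) (z n) (ν n)) (ν n))
            = (y n - z n) + h * (f (t (n+1)) (y n + h * f (t (n+1)) (y n) (ν n)) (ν n)
              - f (t (n+1)) (z n + h * f (t (n+1)) (z n) (ν n)) (ν n)) := by ring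
        rw [e]
        refine le_trans (abs_add_le _ _) ?_
        have : h * |f (t (n+1)) (y n + h * f (t (n+1)) (y n) (ν n)) (ν n)
              - f (t (n+1)) (z n + h * f (t (n+1)) (z n) (ν n)) (ν n)|
            ≤ h * (L₁ * (|y n - z n| + h * (L₁ * |y n - z n|))) :=
          mul_le_mul_of_nonneg_left h3 hh.le
        rw [abs_mul, abs_of_pos hh]
        nlinarith [this]
      calc |y (n+1) - z (n+1)| ≤ (1 + a) * |y n - z n| := h1
        _ ≤ (1 + a) * ((1 + a) ^ n * |y 0 - z 0|) := by
            exact mul_le_mul_of_nonneg_left ih (by linarith)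
        _ = (1 + a) ^ (n + 1) * |y 0 - z 0| := by ring
  intro n hn
  have hexp : (1 + a) ^ n ≤ Real.exp (T_M * L₁ * (1 + h * L₁)) := by
    calc (1 + a) ^ n ≤ (Real.exp a) ^ n := by
          apply pow_le_pow_left₀ (by linarith)
          linarith [Real.add_one_le_exp a]
      _ = Real.exp (n * a) := by rw [← Real.exp_nat_mul]
      _ ≤ Real.exp (T_M * L₁ * (1 + h * L₁)) := by
          apply Real.exp_le_exp.mpr
          have : (n:ℝ) * a = (n * h) * (L₁ * (1 + h * L₁)) := by rw [ha]; ring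
          rw [this]
          have hL : 0 ≤ L₁ * (1 + h * L₁) := by positivity
          calc (n:ℝ) * h * (L₁ * (1 + h * L₁)) ≤ T_M * (L₁ * (1 + h * L₁)) := by
                exact mul_le_mul_of_nonneg_right hn hL
            _ = T_M * L₁ * (1 + h * L₁) := by ring
  calc |y n - z n| ≤ (1 + a) ^ n * |y 0 - z 0| := key n
    _ ≤ Real.exp (T_M * L₁ * (1 + h * L₁)) * ε := by
        apply mul_le_mul hexp hε (abs_nonneg _) (Real.exp_pos _).le
end

section
/- Let f be Lipschitz in its second argument with constant L₁ and suppose h θ L₁ < 1. Let y* be the exact solution of the implicit equation y = c + hθ f(t', y, ν') where c = y_n + h(1−θ) f(t_n, y_n, ν_n), and let ỹ = c + hθ f(t', c + hθ f(t', c, ν'), ν') be the value produced by the 3-term NIM (two fixed-point iterations from c). Then |ỹ − y*| ≤ (hθL₁)² / (1 − hθL₁) · |hθ f(t', c, ν')|. -/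
/-! The NIM value is the second Picard iterate `g (g c)` of the map `g y = c + hθ f(t', y, ν')`,
a contraction with constant `q = hθL₁` whose fixed point is `y*`. Two contraction steps give the
factor `q²`, and the a priori estimate `|c - y*| ≤ |c - g c| / (1 - q)` of Banach's fixed point
theorem turns `|c - y*|` into `|hθ f(t', c, ν')| / (1 - q)`. -/

open Function NNReal

theorem ContractingWith.dist_iterate_le_of_isFixedPt {α : Type*} [MetricSpace α] {K : ℝ≥0}
    {g : α → α} (hg : ContractingWith K g) (x : α) {y : α} (hy : IsFixedPt g y) (n : ℕ) :
    dist (g^[n] x) y ≤ K ^ n / (1 - K) * dist x (g x) := by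
  calc dist (g^[n] x) y = dist (g^[n] x) (g^[n] y) := by rw [(hy.iterate n).eq]
    _ ≤ K ^ n * dist x y := by
        simpa using (hg.toLipschitzWith.iterate n).dist_le_mul x y
    _ ≤ K ^ n * (dist x (g x) / (1 - K)) := by
        gcongr
        exact hg.dist_le_of_fixedPoint x hy
    _ = K ^ n / (1 - K) * dist x (g x) := by ring

theorem contractingWith_const_add_mul {φ : ℝ → ℝ} {a L : ℝ} (ha : 0 ≤ a) (hL : 0 ≤ L)
    (hφ : ∀ x y, |φ x - φ y| ≤ L * |x - y|) (haL : a * L < 1) (c : ℝ) :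
    ContractingWith ⟨a * L, mul_nonneg ha hL⟩ (fun y => c + a * φ y) := by
  refine ⟨by exact_mod_cast haL, LipschitzWith.of_dist_le_mul fun x y => ?_⟩
  simp only [Real.dist_eq, add_sub_add_left_eq_sub, ← mul_sub, abs_mul, abs_of_nonneg ha]
  exact (mul_le_mul_of_nonneg_left (hφ x y) ha).trans_eq (mul_assoc a L _).symm

theorem stmt_9 (f : ℝ → ℝ → ℝ → ℝ) (L₁ h θ : ℝ) (hL₁ : 0 < L₁) (hh : 0 < h)
    (hθ : θ ∈ Set.Ioc (0 : ℝ) 1) (hcontr : h * θ * L₁ < 1)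
    (hf : ∀ t u x₁ x₂, |f t x₁ u - f t x₂ u| ≤ L₁ * |x₁ - x₂|)
    (t' ν' c ystar : ℝ)
    (hstar : ystar = c + h * θ * f t' ystar ν') :
    |(c + h * θ * f t' (c + h * θ * f t' c ν') ν') - ystar| ≤
      (h * θ * L₁) ^ 2 / (1 - h * θ * L₁) * |h * θ * f t' c ν'| := by
  have hg := contractingWith_const_add_mul (mul_pos hh hθ.1).le hL₁.le (hf t' ν') hcontr c
  have hsecond : |(c + h * θ * f t' (c + h * θ * f t' c ν') ν') - ystar| ≤
      (h * θ * L₁) ^ 2 / (1 - h * θ * L₁) * |c - (c + h * θ * f t' c ν')| :=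
    hg.dist_iterate_le_of_isFixedPt c hstar.symm 2
  rwa [sub_add_cancel_left, abs_neg] at hsecond
end
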